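/- The villainy of P_3 + rK_1 (a path on 3 vertices plus r isolated vertices) equals 2 for every r ≥ 0. -/

import Mathlib

open Finset

variable {V : Type*}

/-- A proper coloring given as a function to ℕ. -/
def IsProperColoring (G : SimpleGraph V) (c : V → ℕ) : Prop :=
  ∀ ⦃u v⦄, G.Adj u v → c u ≠ c v

variable [Fintype V] [DecidableEq V]

/-- Two colorings use every color the same number of times. -/
def SameColorCounts (c c' : V → ℕ) : Prop :=
  ∀ k : ℕ, (univ.filter fun v => c v = k).card = (univ.filter fun v => c' v = k).card

/-- The number of vertices on which two colorings differ. -/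
def recolorCount (c c' : V → ℕ) : ℕ := (univ.filter fun v => c v ≠ c' v).card

/-- The ℕ-valued chromatic number. -/
noncomputable def chromNum (G : SimpleGraph V) : ℕ := G.chromaticNumber.toNat

/-- A proper coloring of `G` using exactly `χ(G)` colors. -/
noncomputable def IsOptimalColoring (G : SimpleGraph V) (f : V → ℕ) : Prop :=
  IsProperColoring G f ∧ (univ.image f).card = chromNum G

/-- The villainy of a coloring `c`: the least number of vertices that must be
recolored to obtain a proper coloring using each color as often as `c` does. -/
noncomputable def colVillainy (G : SimpleGraph V) (c : V → ℕ) : ℕ :=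
  sInf {n | ∃ c', IsProperColoring G c' ∧ SameColorCounts c c' ∧ recolorCount c c' = n}

/-- `c` is a permutation of the coloring `f`. -/
def IsPermutationOf (c f : V → ℕ) : Prop := ∃ σ : Equiv.Perm V, c = f ∘ σ

/-- The villainy of `G`: the maximum villainy over all permutations of optimal
proper colorings of `G`. -/
noncomputable def villainy (G : SimpleGraph V) : ℕ :=
  sSup {n | ∃ f c, IsOptimalColoring G f ∧ IsPermutationOf c f ∧ colVillainy G c = n}

/-! A permutation of a proper coloring is nonconstant, and one transposition of colors always
repairs the path: if the middle vertex shares its color with exactly one end, swap it with the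
other end; if with both, swap it with any vertex of another color. So every such coloring has
villainy at most 2. Conversely, two colorings with the same color counts never differ in exactly
one vertex, so the improper permutation `0, 0, 1` of the path coloring `0, 1, 0` has villainy 2. -/

open SimpleGraph

section Recoloring

variable {α : Type*} [Fintype α]

lemma sameColorCounts_comp_perm (c : α → ℕ) (σ : Equiv.Perm α) : SameColorCounts (c ∘ σ) c :=
  fun k => card_bijective σ σ.bijective (by simp)

lemma SameColorCounts.symm {c c' : α → ℕ} (h : SameColorCounts c c') : SameColorCounts c' c :=
  fun k => (h k).symm

lemma recolorCount_eq_zero_iff {c c' : α → ℕ} : recolorCount c c' = 0 ↔ c = c' := by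
  simp [recolorCount, funext_iff]

lemma SameColorCounts.recolorCount_ne_one {c c' : α → ℕ} (h : SameColorCounts c c') :
    recolorCount c c' ≠ 1 := by
  classical
  intro h1
  obtain ⟨v, hv⟩ := card_eq_one.mp h1
  have hagree : ∀ w ≠ v, c w = c' w := fun w hw => by
    by_contra hne
    exact hw (mem_singleton.mp (hv ▸ by simp [hne]))
  have hdiff : c v ≠ c' v := by
    simpa using (hv.symm ▸ mem_singleton_self v : v ∈ univ.filter fun w => c w ≠ c' w)
  -- off `v` the colorings agree, so color `c v` is used once less by `c'`
  have herase : (univ.filter fun w => c' w = c v) = (univ.filter fun w => c w = c v).erase v := by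
    ext w
    by_cases hw : w = v
    · simp [hw, Ne.symm hdiff]
    · simp [hw, hagree w hw]
  have hk := h (c v)
  rw [herase, card_erase_of_mem (by simp)] at hk
  have : 0 < (univ.filter fun w => c w = c v).card := card_pos.mpr ⟨v, by simp⟩
  omega

lemma recolorCount_comp_swap_le [DecidableEq α] (c : α → ℕ) (u w : α) :
    recolorCount c (c ∘ Equiv.swap u w) ≤ 2 := by
  refine (card_le_card (t := {u, w}) fun v hv => ?_).trans card_le_two
  by_contra hvuw
  simp only [mem_insert, mem_singleton, not_or] at hvuw
  simp [Equiv.swap_apply_of_ne_of_ne hvuw.1 hvuw.2] at hv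

end Recoloring

lemma chromNum_eq_two {α : Type*} {G : SimpleGraph α} {f : α → ℕ} (hf : IsProperColoring G f)
    (hlt : ∀ v, f v < 2) {u v : α} (huv : G.Adj u v) : chromNum G = 2 := by
  have hcol : G.Colorable 2 := ⟨Coloring.mk (fun v => ⟨f v, hlt v⟩) fun h => by simpa using hf h⟩
  rw [chromNum, le_antisymm hcol.chromaticNumber_le (two_le_chromaticNumber_of_adj huv)]
  rfl

section Villainy

variable {α : Type*} [Fintype α] {G : SimpleGraph α}

lemma colVillainy_le_recolorCount {c c' : α → ℕ} (hc' : IsProperColoring G c')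
    (h : SameColorCounts c c') : colVillainy G c ≤ recolorCount c c' :=
  Nat.sInf_le ⟨c', hc', h, rfl⟩

lemma colVillainy_le_two_of_comp_swap [DecidableEq α] {c : α → ℕ} {u w : α}
    (h : IsProperColoring G (c ∘ Equiv.swap u w)) : colVillainy G c ≤ 2 :=
  (colVillainy_le_recolorCount h (sameColorCounts_comp_perm c _).symm).trans
    (recolorCount_comp_swap_le c u w)

lemma two_le_colVillainy {c c' : α → ℕ} (hc : ¬IsProperColoring G c)
    (hc' : IsProperColoring G c') (h : SameColorCounts c c') : 2 ≤ colVillainy G c := by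
  refine le_csInf ⟨_, c', hc', h, rfl⟩ ?_
  rintro _ ⟨c'', hproper, hsame, rfl⟩
  have h0 : recolorCount c c'' ≠ 0 := fun h0 => hc (recolorCount_eq_zero_iff.mp h0 ▸ hproper)
  have h1 := hsame.recolorCount_ne_one
  omega

lemma isOptimalColoring_of_lt_two {f : α → ℕ} (hf : IsProperColoring G f) (hlt : ∀ v, f v < 2)
    {u v : α} (huv : G.Adj u v) : IsOptimalColoring G f := by
  refine ⟨hf, le_antisymm ?_ ?_ |>.trans (chromNum_eq_two hf hlt huv).symm⟩
  · simpa using card_le_card (t := range 2) fun k hk => by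
      obtain ⟨w, -, rfl⟩ := mem_image.mp hk
      exact mem_range.mpr (hlt w)
  · calc 2 = ({f u, f v} : Finset ℕ).card := (card_pair (hf huv)).symm
      _ ≤ _ := card_le_card <| by simp [insert_subset_iff]

end Villainy

lemma exists_swap_ne_ne {α β : Type*} [DecidableEq α] {c : α → β} {x y z w : α} (hxy : x ≠ y)
    (hzy : z ≠ y) (hw : c w ≠ c y) :
    ∃ u u', c (Equiv.swap u u' x) ≠ c (Equiv.swap u u' y) ∧
      c (Equiv.swap u u' y) ≠ c (Equiv.swap u u' z) := by
  by_cases hx : c x = c y <;> by_cases hz : c z = c y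
  · -- the whole path has one color: bring in a vertex of another color as the middle
    have hwx : w ≠ x := fun h => hw (h ▸ hx)
    have hwz : w ≠ z := fun h => hw (h ▸ hz)
    refine ⟨y, w, ?_, ?_⟩ <;>
      simp [Equiv.swap_apply_of_ne_of_ne, hxy, hzy, hwx.symm, hwz.symm, hx, hz, hw, Ne.symm hw]
  · have hxz : x ≠ z := fun h => hz (h ▸ hx)
    refine ⟨y, z, ?_, ?_⟩ <;> simp [Equiv.swap_apply_of_ne_of_ne, hxy, hxz, hx, hz, Ne.symm hz]
  · have hzx : z ≠ x := fun h => hx (h ▸ hz)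
    refine ⟨y, x, ?_, ?_⟩ <;> simp [Equiv.swap_apply_of_ne_of_ne, hzy, hzx, hx, hz, Ne.symm hx]
  · exact ⟨y, y, by simpa using hx, by simpa using Ne.symm hz⟩

section PathPlusIsolated

variable {α β : Type*}

lemma isProperColoring_sum_iff {G : SimpleGraph α} {H : SimpleGraph β} (c : α ⊕ β → ℕ) :
    IsProperColoring (G ⊕g H) c ↔
      IsProperColoring G (c ∘ Sum.inl) ∧ IsProperColoring H (c ∘ Sum.inr) := by
  refine ⟨fun h => ⟨fun u v huv => h (by simpa using huv), fun u v huv => h (by simpa using huv)⟩,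
    fun ⟨hG, hH⟩ => ?_⟩
  rintro (u | u) (v | v) huv
  · exact hG (by simpa using huv)
  · simp at huv
  · simp at huv
  · exact hH (by simpa using huv)

lemma isProperColoring_bot (c : α → ℕ) : IsProperColoring ⊥ c := fun _ _ h => h.elim

lemma isProperColoring_pathGraph_mod_two (n : ℕ) :
    IsProperColoring (pathGraph n) fun i => i.val % 2 := by
  intro u v huv
  rw [pathGraph_adj] at huv
  change u.val % 2 ≠ v.val % 2
  omega

lemma isProperColoring_pathGraph_three_iff (c : Fin 3 → ℕ) :
    IsProperColoring (pathGraph 3) c ↔ c 0 ≠ c 1 ∧ c 1 ≠ c 2 := by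
  refine ⟨fun h => ⟨h (by simp [pathGraph_adj]), h (by simp [pathGraph_adj])⟩, ?_⟩
  rintro ⟨h01, h12⟩ u v huv
  rw [pathGraph_adj] at huv
  fin_cases u <;> fin_cases v <;> simp_all [Ne.symm h01, Ne.symm h12]

lemma isProperColoring_pathGraph_three_sum_bot_iff (c : Fin 3 ⊕ β → ℕ) :
    IsProperColoring (pathGraph 3 ⊕g (⊥ : SimpleGraph β)) c ↔
      c (.inl 0) ≠ c (.inl 1) ∧ c (.inl 1) ≠ c (.inl 2) := by
  simp [isProperColoring_sum_iff, isProperColoring_bot, isProperColoring_pathGraph_three_iff]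

lemma colVillainy_pathGraph_three_sum_bot_le_two [Fintype β] [DecidableEq β]
    {c : Fin 3 ⊕ β → ℕ} {u v : Fin 3 ⊕ β} (huv : c u ≠ c v) :
    colVillainy (pathGraph 3 ⊕g (⊥ : SimpleGraph β)) c ≤ 2 := by
  obtain ⟨w, hw⟩ : ∃ w, c w ≠ c (.inl 1) := by
    by_cases hu : c u = c (.inl 1)
    · exact ⟨v, hu ▸ huv.symm⟩
    · exact ⟨u, hu⟩
  obtain ⟨x, x', hx⟩ := exists_swap_ne_ne (x := .inl 0) (z := .inl 2) (by simp) (by simp) hw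
  exact colVillainy_le_two_of_comp_swap ((isProperColoring_pathGraph_three_sum_bot_iff _).2 hx)

end PathPlusIsolated

theorem villainy_P3_plus_isolated (r : ℕ) :
    villainy (SimpleGraph.pathGraph 3 ⊕g (⊥ : SimpleGraph (Fin r))) = 2 := by
  have hadj : (pathGraph 3 ⊕g (⊥ : SimpleGraph (Fin r))).Adj (.inl 0) (.inl 1) := by
    simp [pathGraph_adj]
  set f : Fin 3 ⊕ Fin r → ℕ := Sum.elim (fun i => i.val % 2) fun _ => 0
  have hf : IsProperColoring (pathGraph 3 ⊕g ⊥) f := (isProperColoring_sum_iff f).2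
    ⟨isProperColoring_pathGraph_mod_two 3, isProperColoring_bot _⟩
  set σ : Equiv.Perm (Fin 3 ⊕ Fin r) := Equiv.swap (.inl 1) (.inl 2)
  have hfσ : ¬IsProperColoring (pathGraph 3 ⊕g ⊥) (f ∘ σ) := by
    simp [isProperColoring_pathGraph_three_sum_bot_iff, f, σ, Equiv.swap_apply_of_ne_of_ne]
  rw [villainy]
  refine IsGreatest.csSup_eq ⟨⟨f, f ∘ σ, ?_, ⟨σ, rfl⟩, ?_⟩, ?_⟩
  · refine isOptimalColoring_of_lt_two hf ?_ hadj
    rintro (i | i) <;> simp only [f, Sum.elim_inl, Sum.elim_inr] <;> omega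
  · have hfσσ : f ∘ σ ∘ σ = f := by ext; simp [σ]
    exact le_antisymm (colVillainy_le_two_of_comp_swap (hfσσ ▸ hf))
      (two_le_colVillainy hfσ hf (sameColorCounts_comp_perm f σ))
  · rintro _ ⟨g, _, hg, ⟨τ, rfl⟩, rfl⟩
    exact colVillainy_pathGraph_three_sum_bot_le_two (u := τ.symm (.inl 0)) (v := τ.symm (.inl 1))
      (by simpa using hg.1 hadj)
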